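/- arXiv:2506.03889 — 2 statements merged into one kernel-verified Lean document; each statement's English description precedes it below -/
import Mathlib

section
/- Let a < b be real numbers, let g : ℝ → ℝ be continuously differentiable on [a,b], and suppose there are reals g_min < g_max with g_min < g(s) < g_max for all s ∈ [a,b]. If for some positive natural number n the total variation ∫_a^b |g'(s)| ds > 2·n·(g_max − g_min), then there exist n distinct points in [a,b] at which g has a local maximum (with respect to [a,b]) and n distinct points in [a,b] at which g has a local minimum (with respect to [a,b]). -/
/-!
Cut `[a, b]` into `n` consecutive pieces, each carrying more than `2 (g_max - g_min)` of the
total variation, and cut each piece into two halves carrying more than `g_max - g_min` each.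
On a half the variation exceeds `|g(end) - g(start)|`, so `g'` takes both signs there. Hence `g'` is
positive somewhere in the first half of a piece and negative somewhere in the second, so the
maximum of `g` between those two points is interior: a local maximum. Applying this to `-g` gives
the local minima, and extrema found in different pieces are distinct.
-/

open Set

theorem exists_intervalIntegral_eq_of_mem_Icc {f : ℝ → ℝ} {u v y : ℝ} (huv : u ≤ v)
    (hf : ContinuousOn f (Icc u v)) (hy : y ∈ Icc 0 (∫ s in u..v, f s)) :
    ∃ c ∈ Icc u v, ∫ s in u..c, f s = y ∧ ∫ s in c..v, f s = (∫ s in u..v, f s) - y := by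
  have hprim : ContinuousOn (fun c => ∫ s in u..c, f s) (Icc u v) := by
    simpa [uIcc_of_le huv] using intervalIntegral.continuousOn_primitive_interval'
      (hf.intervalIntegrable_of_Icc huv) left_mem_uIcc
  obtain ⟨c, hc, hyc⟩ := intermediate_value_Icc huv hprim (by simpa using hy)
  refine ⟨c, hc, hyc, ?_⟩
  rw [← hyc, intervalIntegral.integral_interval_sub_left (hf.intervalIntegrable_of_Icc huv)
    ((hf.mono (Icc_subset_Icc_right hc.2)).intervalIntegrable_of_Icc hc.1)]

section Variation

variable {g g' : ℝ → ℝ} {u v m M : ℝ}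

theorem exists_isLocalMax_Ioo_of_deriv_pos_of_deriv_neg {p q : ℝ} (hpq : p < q)
    (hderiv : ∀ s ∈ Icc p q, HasDerivAt g (g' s) s) (hp : 0 < g' p) (hq : g' q < 0) :
    ∃ m ∈ Ioo p q, IsLocalMax g m := by
  obtain ⟨m, hm, hmax⟩ := isCompact_Icc.exists_isMaxOn (nonempty_Icc.2 hpq.le)
    fun x hx => (hderiv x hx).continuousAt.continuousWithinAt
  have hslope : ∀ y, segment ℝ m y ⊆ Icc p q → (y - m) * g' m ≤ 0 := fun y hy => by
    simpa using hmax.localize.hasFDerivWithinAt_nonpos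
      (hderiv m hm).hasFDerivAt.hasFDerivWithinAt (sub_mem_posTangentConeAt_of_segment_subset hy)
  have hmp : m ≠ p := by
    rintro rfl
    nlinarith [hslope q (segment_subset_Icc hpq.le)]
  have hmq : m ≠ q := by
    rintro rfl
    nlinarith [hslope p (segment_symm ℝ p m ▸ segment_subset_Icc hpq.le)]
  have hm' : m ∈ Ioo p q := ⟨hm.1.lt_of_ne hmp.symm, hm.2.lt_of_ne hmq⟩
  exact ⟨m, hm', hmax.isLocalMax (Icc_mem_nhds hm'.1 hm'.2)⟩

theorem exists_deriv_neg_of_sub_lt_integral_abs (huv : u ≤ v)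
    (hderiv : ∀ s ∈ Icc u v, HasDerivAt g (g' s) s) (hcont : ContinuousOn g' (Icc u v))
    (h : g v - g u < ∫ s in u..v, |g' s|) : ∃ x ∈ Icc u v, g' x < 0 := by
  by_contra! hnonneg
  rw [← uIcc_of_le huv] at hderiv hcont hnonneg
  have habs : ∫ s in u..v, |g' s| = ∫ s in u..v, g' s :=
    intervalIntegral.integral_congr fun x hx => abs_of_nonneg (hnonneg x hx)
  rw [habs, intervalIntegral.integral_eq_sub_of_hasDerivAt hderiv hcont.intervalIntegrable] at h
  exact h.false

theorem exists_deriv_pos_of_sub_lt_integral_abs (huv : u ≤ v)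
    (hderiv : ∀ s ∈ Icc u v, HasDerivAt g (g' s) s) (hcont : ContinuousOn g' (Icc u v))
    (h : g u - g v < ∫ s in u..v, |g' s|) : ∃ x ∈ Icc u v, 0 < g' x := by
  obtain ⟨x, hx, hneg⟩ := exists_deriv_neg_of_sub_lt_integral_abs (g := fun s => -g s) huv
    (fun s hs => (hderiv s hs).neg) hcont.neg (by simp only [abs_neg]; linarith)
  exact ⟨x, hx, neg_neg_iff_pos.1 hneg⟩

theorem exists_isLocalMax_Ioo_of_two_mul_lt_integral_abs (huv : u ≤ v)
    (hderiv : ∀ s ∈ Icc u v, HasDerivAt g (g' s) s) (hcont : ContinuousOn g' (Icc u v))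
    (hg : MapsTo g (Icc u v) (Ioo m M)) (hvar : 2 * (M - m) < ∫ s in u..v, |g' s|) :
    ∃ x ∈ Ioo u v, IsLocalMax g x := by
  set V := ∫ s in u..v, |g' s|
  have hV : 0 ≤ V := intervalIntegral.integral_nonneg huv fun _ _ => abs_nonneg _
  obtain ⟨c, hc, hleft, hright⟩ :=
    exists_intervalIntegral_eq_of_mem_Icc huv hcont.abs ⟨by positivity, by linarith⟩ (y := V / 2)
  have hsub_left : Icc u c ⊆ Icc u v := Icc_subset_Icc_right hc.2
  have hsub_right : Icc c v ⊆ Icc u v := Icc_subset_Icc_left hc.1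
  have hosc : ∀ x ∈ Icc u v, ∀ y ∈ Icc u v, g x - g y < M - m := fun x hx y hy => by
    linarith [(hg hx).2, (hg hy).1]
  obtain ⟨p, hp, hp_pos⟩ := exists_deriv_pos_of_sub_lt_integral_abs hc.1
    (fun s hs => hderiv s (hsub_left hs)) (hcont.mono hsub_left) <| by
      linarith [hosc u (left_mem_Icc.2 huv) c hc]
  obtain ⟨q, hq, hq_neg⟩ := exists_deriv_neg_of_sub_lt_integral_abs hc.2
    (fun s hs => hderiv s (hsub_right hs)) (hcont.mono hsub_right) <| by
      linarith [hosc v (right_mem_Icc.2 huv) c hc]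
  have hpq : p < q := (hp.2.trans hq.1).lt_of_ne fun h => by rw [h] at hp_pos; linarith
  obtain ⟨x, hx, hmax⟩ := exists_isLocalMax_Ioo_of_deriv_pos_of_deriv_neg hpq
    (fun s hs => hderiv s ⟨hp.1.trans hs.1, hs.2.trans hq.2⟩) hp_pos hq_neg
  exact ⟨x, ⟨hp.1.trans_lt hx.1, hx.2.trans_le hq.2⟩, hmax⟩

theorem exists_finset_isLocalMax_of_two_mul_lt_integral_abs (n : ℕ) (huv : u ≤ v)
    (hderiv : ∀ s ∈ Icc u v, HasDerivAt g (g' s) s) (hcont : ContinuousOn g' (Icc u v))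
    (hg : MapsTo g (Icc u v) (Ioo m M)) (hvar : 2 * n * (M - m) < ∫ s in u..v, |g' s|) :
    ∃ maxs : Finset ℝ, maxs.card = n ∧ ∀ s ∈ maxs, s ∈ Ioo u v ∧ IsLocalMax g s := by
  induction n generalizing u with
  | zero => exact ⟨∅, rfl, by simp⟩
  | succ n ih =>
    classical
    set V := ∫ s in u..v, |g' s|
    have hD : 0 ≤ M - m := sub_nonneg.2 (nonempty_Ioo.1 ⟨g u, hg (left_mem_Icc.2 huv)⟩).le
    have hnD : 0 ≤ 2 * n * (M - m) := by positivity
    push_cast at hvar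
    -- `y` is the midpoint of `2 (M - m)` and `V - 2 n (M - m)`: both pieces beat their thresholds
    obtain ⟨c, hc, hleft, hright⟩ := exists_intervalIntegral_eq_of_mem_Icc huv hcont.abs
      (y := (V + 2 * (M - m) - 2 * n * (M - m)) / 2) ⟨by linarith, by linarith⟩
    have hsub_left : Icc u c ⊆ Icc u v := Icc_subset_Icc_right hc.2
    have hsub_right : Icc c v ⊆ Icc u v := Icc_subset_Icc_left hc.1
    obtain ⟨x, hx, hxmax⟩ := exists_isLocalMax_Ioo_of_two_mul_lt_integral_abs hc.1
      (fun s hs => hderiv s (hsub_left hs)) (hcont.mono hsub_left) (hg.mono_left hsub_left)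
      (by linarith)
    obtain ⟨maxs, hcard, hmaxs⟩ := ih hc.2 (fun s hs => hderiv s (hsub_right hs))
      (hcont.mono hsub_right) (hg.mono_left hsub_right) (by linarith)
    have hx_notMem : x ∉ maxs := fun hmem => (hx.2.trans (hmaxs x hmem).1.1).false
    refine ⟨insert x maxs, by rw [Finset.card_insert_of_notMem hx_notMem, hcard], ?_⟩
    rintro s hs
    rcases Finset.mem_insert.1 hs with rfl | hs
    · exact ⟨⟨hx.1, hx.2.trans_le hc.2⟩, hxmax⟩
    · obtain ⟨hs_mem, hsmax⟩ := hmaxs s hs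
      exact ⟨⟨hc.1.trans_lt hs_mem.1, hs_mem.2⟩, hsmax⟩

theorem exists_finset_isLocalMin_of_two_mul_lt_integral_abs (n : ℕ) (huv : u ≤ v)
    (hderiv : ∀ s ∈ Icc u v, HasDerivAt g (g' s) s) (hcont : ContinuousOn g' (Icc u v))
    (hg : MapsTo g (Icc u v) (Ioo m M)) (hvar : 2 * n * (M - m) < ∫ s in u..v, |g' s|) :
    ∃ mins : Finset ℝ, mins.card = n ∧ ∀ s ∈ mins, s ∈ Ioo u v ∧ IsLocalMin g s := by
  obtain ⟨mins, hcard, hmins⟩ := exists_finset_isLocalMax_of_two_mul_lt_integral_abs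
    (g := fun s => -g s) (m := -M) (M := -m) n huv (fun s hs => (hderiv s hs).neg) hcont.neg
    (fun s hs => ⟨neg_lt_neg (hg hs).2, neg_lt_neg (hg hs).1⟩)
    (by simp only [abs_neg]; linarith)
  exact ⟨mins, hcard, fun s hs => ⟨(hmins s hs).1, by simpa using (hmins s hs).2.neg⟩⟩

end Variation

theorem bounded_line_many_extrema_general
    (a b : ℝ) (hab : a < b) (g g' : ℝ → ℝ)
    (hderiv : ∀ s ∈ Set.Icc a b, HasDerivAt g (g' s) s)
    (hcont : ContinuousOn g' (Set.Icc a b))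
    (g_min g_max : ℝ)
    (hbound : ∀ s ∈ Set.Icc a b, g_min < g s ∧ g s < g_max)
    (n : ℕ)
    (hvar : (2 : ℝ) * n * (g_max - g_min) < ∫ s in a..b, |g' s|) :
    ∃ (maxs mins : Finset ℝ),
      maxs.card = n ∧ mins.card = n ∧
      (∀ s ∈ maxs, s ∈ Set.Icc a b ∧ IsLocalMaxOn g (Set.Icc a b) s) ∧
      (∀ s ∈ mins, s ∈ Set.Icc a b ∧ IsLocalMinOn g (Set.Icc a b) s) := by
  obtain ⟨maxs, hmaxs_card, hmaxs⟩ :=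
    exists_finset_isLocalMax_of_two_mul_lt_integral_abs n hab.le hderiv hcont hbound hvar
  obtain ⟨mins, hmins_card, hmins⟩ :=
    exists_finset_isLocalMin_of_two_mul_lt_integral_abs n hab.le hderiv hcont hbound hvar
  refine ⟨maxs, mins, hmaxs_card, hmins_card, fun s hs => ?_, fun s hs => ?_⟩
  · exact ⟨Ioo_subset_Icc_self (hmaxs s hs).1, (hmaxs s hs).2.on _⟩
  · exact ⟨Ioo_subset_Icc_self (hmins s hs).1, (hmins s hs).2.on _⟩

/-- **Lemma A.12 (boundedLine).**
If `g` is continuously differentiable on `[a,b]`, bounded strictly between `g_min` and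
`g_max` there, and its total variation `∫ |g'|` on `[a,b]` exceeds `2 n (g_max - g_min)`,
then `g` has at least `n` local maxima and `n` local minima on `[a,b]`
(local with respect to the set `[a,b]`). -/
theorem bounded_line_many_extrema
    (a b : ℝ) (hab : a < b) (g g' : ℝ → ℝ)
    (hderiv : ∀ s ∈ Set.Icc a b, HasDerivAt g (g' s) s)
    (hcont : ContinuousOn g' (Set.Icc a b))
    (g_min g_max : ℝ) (hminmax : g_min < g_max)
    (hbound : ∀ s ∈ Set.Icc a b, g_min < g s ∧ g s < g_max)
    (n : ℕ) (hn : 0 < n)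
    (hvar : (2 : ℝ) * n * (g_max - g_min) < ∫ s in a..b, |g' s|) :
    ∃ (maxs mins : Finset ℝ),
      maxs.card = n ∧ mins.card = n ∧
      (∀ s ∈ maxs, s ∈ Set.Icc a b ∧ IsLocalMaxOn g (Set.Icc a b) s) ∧
      (∀ s ∈ mins, s ∈ Set.Icc a b ∧ IsLocalMinOn g (Set.Icc a b) s) :=
  bounded_line_many_extrema_general a b hab g g' hderiv hcont g_min g_max hbound n hvar
end

section
/- Let N ≥ 1, let L : ℝ^N → ℝ be continuously differentiable, and let θ₁ ≠ θ₂ be points of ℝ^N. Suppose there are reals m < M with m < L(θ₁ + t(θ₂ − θ₁)) < M for all t ∈ [0,1], and for some positive natural number n, ∫_0^1 |⟨∇L(θ₁ + t(θ₂ − θ₁)), θ₂ − θ₁⟩| dt > 2·n·(M − m). Then the function g(t) = L(θ₁ + t(θ₂ − θ₁)) on [0,1] has at least n distinct local maximum points and n distinct local minimum points in [0,1]. -/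
/-!
A continuous `g` with no local maximum inside `[a, b]` decreases to its minimum and then
increases, so its total variation `∫ₐᵇ |g'|` is at most twice its oscillation. Hence every piece
of `[0, 1]` carrying more than `2 (M - m)` of variation contains an interior local maximum and,
applying this to `-g`, an interior local minimum; the hypothesis lets us cut `[0, 1]` into `n`
consecutive such pieces.
-/

open scoped RealInnerProductSpace

open Set MeasureTheory intervalIntegral

section Extrema

variable {g φ : ℝ → ℝ} {a b D : ℝ}

theorem exists_isLocalMax_mem_Ioo {w : ℝ} (hg : ContinuousOn g (Icc a b)) (hw : w ∈ Icc a b)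
    (ha : g a < g w) (hb : g b < g w) : ∃ q ∈ Ioo a b, IsLocalMax g q := by
  obtain ⟨q, hq, hmax⟩ := isCompact_Icc.exists_isMaxOn ⟨w, hw⟩ hg
  have hqa : q ≠ a := by rintro rfl; exact (hmax hw).not_gt ha
  have hqb : q ≠ b := by rintro rfl; exact (hmax hw).not_gt hb
  have hq' : q ∈ Ioo a b := ⟨hq.1.lt_of_ne hqa.symm, hq.2.lt_of_ne hqb⟩
  exact ⟨q, hq', hmax.isLocalMax (Icc_mem_nhds hq'.1 hq'.2)⟩

theorem antitoneOn_Icc_of_isMinOn_of_forall_not_isLocalMax {p : ℝ} (hg : ContinuousOn g (Icc a p))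
    (hmin : IsMinOn g (Icc a p) p) (hnomax : ∀ q ∈ Ioo a p, ¬IsLocalMax g q) :
    AntitoneOn g (Icc a p) := by
  intro x hx y hy hxy
  by_contra! hlt
  obtain ⟨q, hq, hqmax⟩ := exists_isLocalMax_mem_Ioo (hg.mono (Icc_subset_Icc_left hx.1))
    ⟨hxy, hy.2⟩ hlt ((hmin hx).trans_lt hlt)
  exact hnomax q ⟨hx.1.trans_lt hq.1, hq.2⟩ hqmax

theorem monotoneOn_Icc_of_isMinOn_of_forall_not_isLocalMax {p : ℝ} (hg : ContinuousOn g (Icc p b))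
    (hmin : IsMinOn g (Icc p b) p) (hnomax : ∀ q ∈ Ioo p b, ¬IsLocalMax g q) :
    MonotoneOn g (Icc p b) := by
  intro x hx y hy hxy
  by_contra! hlt
  obtain ⟨q, hq, hqmax⟩ := exists_isLocalMax_mem_Ioo (hg.mono (Icc_subset_Icc_right hy.2))
    ⟨hx.1, hxy⟩ ((hmin hy).trans_lt hlt) hlt
  exact hnomax q ⟨hq.1, hq.2.trans_le hy.2⟩ hqmax

theorem integral_abs_eq_sub_of_antitoneOn (hab : a ≤ b)
    (hg : ∀ t ∈ Icc a b, HasDerivAt g (φ t) t) (hφ : IntervalIntegrable φ volume a b)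
    (hanti : AntitoneOn g (Icc a b)) : ∫ t in a..b, |φ t| = g a - g b := by
  have hnonpos : ∀ t ∈ Ioo a b, φ t ≤ 0 := by
    intro t ht
    have hacc : AccPt t (Filter.principal (Icc a b)) := by
      simpa using (PerfectSpace.univ_preperfect t (mem_univ t)).nhds_inter
        (Icc_mem_nhds ht.1 ht.2)
    exact (hg t (Ioo_subset_Icc_self ht)).hasDerivWithinAt.nonpos_of_antitoneOn hacc hanti
  calc ∫ t in a..b, |φ t| = ∫ t in a..b, -φ t :=
        integral_congr_Ioo_of_le hab fun t ht ↦ abs_of_nonpos (hnonpos t ht)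
    _ = g a - g b := by
        rw [intervalIntegral.integral_neg,
          integral_eq_sub_of_hasDerivAt (by rwa [uIcc_of_le hab]) hφ, neg_sub]

theorem integral_abs_eq_sub_of_monotoneOn (hab : a ≤ b)
    (hg : ∀ t ∈ Icc a b, HasDerivAt g (φ t) t) (hφ : IntervalIntegrable φ volume a b)
    (hmono : MonotoneOn g (Icc a b)) : ∫ t in a..b, |φ t| = g b - g a := by
  have := integral_abs_eq_sub_of_antitoneOn (g := fun t ↦ -g t) hab (fun t ht ↦ (hg t ht).neg)
    hφ.neg hmono.neg
  simpa [abs_neg, sub_eq_add_neg, add_comm] using this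

theorem exists_isLocalMax_mem_Ioo_of_two_mul_lt_integral_abs (hab : a ≤ b)
    (hg : ∀ t ∈ Icc a b, HasDerivAt g (φ t) t) (hφ : IntervalIntegrable φ volume a b)
    (hosc : ∀ x ∈ Icc a b, ∀ y ∈ Icc a b, g x - g y ≤ D)
    (hint : 2 * D < ∫ t in a..b, |φ t|) : ∃ q ∈ Ioo a b, IsLocalMax g q := by
  by_contra! hnomax
  have hgc : ContinuousOn g (Icc a b) := fun t ht ↦ (hg t ht).continuousAt.continuousWithinAt
  obtain ⟨p, hp, hmin⟩ := isCompact_Icc.exists_isMinOn (nonempty_Icc.2 hab) hgc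
  have hap : Icc a p ⊆ Icc a b := Icc_subset_Icc_right hp.2
  have hpb : Icc p b ⊆ Icc a b := Icc_subset_Icc_left hp.1
  -- With no interior local maximum, `g` falls to its minimum at `p` and then rises again.
  have hanti : AntitoneOn g (Icc a p) :=
    antitoneOn_Icc_of_isMinOn_of_forall_not_isLocalMax (hgc.mono hap) (hmin.on_subset hap)
      fun q hq ↦ hnomax q ⟨hq.1, hq.2.trans_le hp.2⟩
  have hmono : MonotoneOn g (Icc p b) :=
    monotoneOn_Icc_of_isMinOn_of_forall_not_isLocalMax (hgc.mono hpb) (hmin.on_subset hpb)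
      fun q hq ↦ hnomax q ⟨hp.1.trans_lt hq.1, hq.2⟩
  have hφap : IntervalIntegrable φ volume a p :=
    hφ.mono_set (by simpa [uIcc_of_le hab, uIcc_of_le hp.1] using hap)
  have hφpb : IntervalIntegrable φ volume p b :=
    hφ.mono_set (by simpa [uIcc_of_le hab, uIcc_of_le hp.2] using hpb)
  have hleft := integral_abs_eq_sub_of_antitoneOn hp.1 (fun t ht ↦ hg t (hap ht)) hφap hanti
  have hright := integral_abs_eq_sub_of_monotoneOn hp.2 (fun t ht ↦ hg t (hpb ht)) hφpb hmono
  rw [← integral_add_adjacent_intervals hφap.abs hφpb.abs, hleft, hright] at hint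
  linarith [hosc a (left_mem_Icc.2 hab) p hp, hosc b (right_mem_Icc.2 hab) p hp]

theorem exists_finset_isLocalMax_of_two_mul_lt_integral_abs_s1 (n : ℕ) (hab : a ≤ b)
    (hg : ∀ t ∈ Icc a b, HasDerivAt g (φ t) t) (hφ : IntervalIntegrable φ volume a b)
    (hosc : ∀ x ∈ Icc a b, ∀ y ∈ Icc a b, g x - g y ≤ D)
    (hint : 2 * n * D < ∫ t in a..b, |φ t|) :
    ∃ S : Finset ℝ, S.card = n ∧ ∀ q ∈ S, q ∈ Ioo a b ∧ IsLocalMax g q := by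
  induction n generalizing a with
  | zero => exact ⟨∅, rfl, by simp⟩
  | succ n ih =>
    have hD : 0 ≤ D := by simpa using hosc a (left_mem_Icc.2 hab) a (left_mem_Icc.2 hab)
    push_cast at hint
    -- Cut `[a, b]` at `c` so that `[a, c]` carries more than `2 D` and `[c, b]` more than `2 n D`.
    obtain ⟨c, hc, hac⟩ : ∃ c ∈ Icc a b, ∫ t in a..c, |φ t| =
        2 * D + ((∫ t in a..b, |φ t|) - 2 * (n + 1) * D) / 2 := by
      refine intermediate_value_Icc hab ?_ ⟨?_, ?_⟩
      · simpa [uIcc_of_le hab] using continuousOn_primitive_interval' hφ.abs left_mem_uIcc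
      · simp only [integral_same]; nlinarith
      · nlinarith [n.cast_nonneg (α := ℝ)]
    have hac_sub : Icc a c ⊆ Icc a b := Icc_subset_Icc_right hc.2
    have hcb_sub : Icc c b ⊆ Icc a b := Icc_subset_Icc_left hc.1
    have hφac : IntervalIntegrable φ volume a c :=
      hφ.mono_set (by simpa [uIcc_of_le hab, uIcc_of_le hc.1] using hac_sub)
    have hφcb : IntervalIntegrable φ volume c b :=
      hφ.mono_set (by simpa [uIcc_of_le hab, uIcc_of_le hc.2] using hcb_sub)
    have hsplit := integral_add_adjacent_intervals hφac.abs hφcb.abs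
    obtain ⟨q, hq, hqmax⟩ := exists_isLocalMax_mem_Ioo_of_two_mul_lt_integral_abs hc.1
      (fun t ht ↦ hg t (hac_sub ht)) hφac (fun x hx y hy ↦ hosc x (hac_sub hx) y (hac_sub hy))
      (by linarith)
    obtain ⟨S, hcard, hS⟩ := ih hc.2 (fun t ht ↦ hg t (hcb_sub ht)) hφcb
      (fun x hx y hy ↦ hosc x (hcb_sub hx) y (hcb_sub hy)) (by linarith)
    have hqS : q ∉ S := fun h ↦ (hq.2.trans (hS q h).1.1).false
    refine ⟨insert q S, by rw [Finset.card_insert_of_notMem hqS, hcard], ?_⟩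
    simp only [Finset.forall_mem_insert]
    exact ⟨⟨⟨hq.1, hq.2.trans_le hc.2⟩, hqmax⟩,
      fun r hr ↦ ⟨⟨hc.1.trans_lt (hS r hr).1.1, (hS r hr).1.2⟩, (hS r hr).2⟩⟩

theorem exists_finset_isLocalMin_of_two_mul_lt_integral_abs_s1 (n : ℕ) (hab : a ≤ b)
    (hg : ∀ t ∈ Icc a b, HasDerivAt g (φ t) t) (hφ : IntervalIntegrable φ volume a b)
    (hosc : ∀ x ∈ Icc a b, ∀ y ∈ Icc a b, g x - g y ≤ D)
    (hint : 2 * n * D < ∫ t in a..b, |φ t|) :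
    ∃ S : Finset ℝ, S.card = n ∧ ∀ q ∈ S, q ∈ Ioo a b ∧ IsLocalMin g q := by
  obtain ⟨S, hcard, hS⟩ := exists_finset_isLocalMax_of_two_mul_lt_integral_abs_s1 (g := fun t ↦ -g t)
    (D := D) n hab (fun t ht ↦ (hg t ht).neg) hφ.neg
    (fun x hx y hy ↦ by linarith [hosc y hy x hx]) (by simpa using hint)
  exact ⟨S, hcard, fun q hq ↦ ⟨(hS q hq).1, by simpa using (hS q hq).2.neg⟩⟩

end Extrema

section Segment

variable {E : Type*} [NormedAddCommGroup E] [InnerProductSpace ℝ E] [CompleteSpace E]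
  {L : E → ℝ} {x v : E}

theorem hasDerivAt_comp_add_smul {t : ℝ} (hL : DifferentiableAt ℝ L (x + t • v)) :
    HasDerivAt (fun s : ℝ ↦ L (x + s • v)) ⟪gradient L (x + t • v), v⟫ t := by
  have hline : HasDerivAt (fun s : ℝ ↦ x + s • v) v t := by
    simpa using ((hasDerivAt_id t).smul_const v).const_add x
  rw [inner_gradient_left]
  exact hL.hasFDerivAt.comp_hasDerivAt t hline

theorem continuous_inner_gradient_comp_add_smul (hL : ContDiff ℝ 1 L) :
    Continuous fun s : ℝ ↦ ⟪gradient L (x + s • v), v⟫ := by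
  simp only [inner_gradient_left]
  exact ((hL.continuous_fderiv one_ne_zero).comp (by fun_prop)).clm_apply continuous_const

end Segment

theorem loss_landscape_roughness_general
    (N : ℕ)
    (L : EuclideanSpace ℝ (Fin N) → ℝ) (hL : ContDiff ℝ 1 L)
    (θ₁ θ₂ : EuclideanSpace ℝ (Fin N))
    (m M : ℝ)
    (hbound : ∀ t ∈ Set.Icc (0 : ℝ) 1,
      m < L (θ₁ + t • (θ₂ - θ₁)) ∧ L (θ₁ + t • (θ₂ - θ₁)) < M)
    (n : ℕ)
    (hvar : (2 : ℝ) * n * (M - m) <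
      ∫ t in (0 : ℝ)..1, |⟪gradient L (θ₁ + t • (θ₂ - θ₁)), θ₂ - θ₁⟫|) :
    ∃ (maxs mins : Finset ℝ),
      maxs.card = n ∧ mins.card = n ∧
      (∀ t ∈ maxs, t ∈ Set.Icc (0 : ℝ) 1 ∧
        IsLocalMaxOn (fun s : ℝ => L (θ₁ + s • (θ₂ - θ₁))) (Set.Icc (0 : ℝ) 1) t) ∧
      (∀ t ∈ mins, t ∈ Set.Icc (0 : ℝ) 1 ∧
        IsLocalMinOn (fun s : ℝ => L (θ₁ + s • (θ₂ - θ₁))) (Set.Icc (0 : ℝ) 1) t) := by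
  have hderiv : ∀ t ∈ Icc (0 : ℝ) 1, HasDerivAt (fun s : ℝ ↦ L (θ₁ + s • (θ₂ - θ₁)))
      ⟪gradient L (θ₁ + t • (θ₂ - θ₁)), θ₂ - θ₁⟫ t :=
    fun t _ ↦ hasDerivAt_comp_add_smul ((hL.differentiable one_ne_zero) _)
  have hφ : IntervalIntegrable (fun t : ℝ ↦ ⟪gradient L (θ₁ + t • (θ₂ - θ₁)), θ₂ - θ₁⟫)
      volume 0 1 := (continuous_inner_gradient_comp_add_smul hL).intervalIntegrable 0 1
  have hosc : ∀ x ∈ Icc (0 : ℝ) 1, ∀ y ∈ Icc (0 : ℝ) 1,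
      L (θ₁ + x • (θ₂ - θ₁)) - L (θ₁ + y • (θ₂ - θ₁)) ≤ M - m :=
    fun x hx y hy ↦ by linarith [hbound x hx, hbound y hy]
  obtain ⟨maxs, hmaxs_card, hmaxs⟩ :=
    exists_finset_isLocalMax_of_two_mul_lt_integral_abs_s1 n zero_le_one hderiv hφ hosc hvar
  obtain ⟨mins, hmins_card, hmins⟩ :=
    exists_finset_isLocalMin_of_two_mul_lt_integral_abs_s1 n zero_le_one hderiv hφ hosc hvar
  exact ⟨maxs, mins, hmaxs_card, hmins_card,
    fun t ht ↦ ⟨Ioo_subset_Icc_self (hmaxs t ht).1, (hmaxs t ht).2.on _⟩,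
    fun t ht ↦ ⟨Ioo_subset_Icc_self (hmins t ht).1, (hmins t ht).2.on _⟩⟩

/-- **Theorem A.13 (loss landscape roughness), core statement.**
If the loss `L : ℝ^N → ℝ` is `C¹`, stays strictly between `m` and `M` along the segment
from `θ₁` to `θ₂`, and the integral over `[0,1]` of the absolute projected gradient
`|⟪∇L(θ₁ + t(θ₂ - θ₁)), θ₂ - θ₁⟫|` exceeds `2 n (M - m)`, then the restriction
`g(t) = L(θ₁ + t(θ₂ - θ₁))` has at least `n` local maximum points and `n` local minimum
points in `[0,1]` (local with respect to `[0,1]`). -/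
theorem loss_landscape_roughness
    (N : ℕ) (hN : 1 ≤ N)
    (L : EuclideanSpace ℝ (Fin N) → ℝ) (hL : ContDiff ℝ 1 L)
    (θ₁ θ₂ : EuclideanSpace ℝ (Fin N)) (hθ : θ₁ ≠ θ₂)
    (m M : ℝ) (hmM : m < M)
    (hbound : ∀ t ∈ Set.Icc (0 : ℝ) 1,
      m < L (θ₁ + t • (θ₂ - θ₁)) ∧ L (θ₁ + t • (θ₂ - θ₁)) < M)
    (n : ℕ) (hn : 0 < n)
    (hvar : (2 : ℝ) * n * (M - m) <
      ∫ t in (0 : ℝ)..1, |⟪gradient L (θ₁ + t • (θ₂ - θ₁)), θ₂ - θ₁⟫|) :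
    ∃ (maxs mins : Finset ℝ),
      maxs.card = n ∧ mins.card = n ∧
      (∀ t ∈ maxs, t ∈ Set.Icc (0 : ℝ) 1 ∧
        IsLocalMaxOn (fun s : ℝ => L (θ₁ + s • (θ₂ - θ₁))) (Set.Icc (0 : ℝ) 1) t) ∧
      (∀ t ∈ mins, t ∈ Set.Icc (0 : ℝ) 1 ∧
        IsLocalMinOn (fun s : ℝ => L (θ₁ + s • (θ₂ - θ₁))) (Set.Icc (0 : ℝ) 1) t) :=
  loss_landscape_roughness_general N L hL θ₁ θ₂ m M hbound n hvar
end
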